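/- arXiv:0910.2113 — 2 statements merged into one kernel-verified Lean document; each statement's English description precedes it below -/
import Mathlib

section
/- Every atomic selfish routing instance with pricing in which every congestion cost is affine, every demand r_i is strictly positive, and every strategy set Π_i is finite and nonempty, admits at least one equilibrium strategy profile (a pure Nash equilibrium). -/
/-!
Atomic selfish routing with pricing.  Edges form a finite type `E`; there are `k`
players, player `i` has demand `r i > 0` and a finite nonempty set `Paths i` of paths
(finite subsets of `E`).  Edge `e` has affine congestion cost `c_e(x) = a e * x + b e`
and per-unit price function `u e : ℝ → ℝ`.
-/

open Finset

/-- The flow on edge `e` under profile `P`: the sum of the demands of the players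
whose chosen path contains `e`. -/
noncomputable def edgeFlow {E : Type*} [Fintype E] [DecidableEq E] {k : ℕ}
    (r : Fin k → ℝ) (P : Fin k → Finset E) (e : E) : ℝ :=
  ∑ i, if e ∈ P i then r i else 0

/-- The per-unit cost to player `i` under profile `P`:
`t_i(P) = Σ_{e ∈ P_i} ( c_e(f_e(P)) + u_e(r_i) )` with `c_e(x) = a e * x + b e`. -/
noncomputable def playerCost {E : Type*} [Fintype E] [DecidableEq E] {k : ℕ}
    (a b : E → ℝ) (u : E → ℝ → ℝ) (r : Fin k → ℝ) (P : Fin k → Finset E) (i : Fin k) : ℝ :=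
  ∑ e ∈ P i, (a e * edgeFlow r P e + b e + u e (r i))

/-- A profile `P` is an equilibrium if no player can decrease its per-unit cost by
unilaterally switching to another available path. -/
def IsEquilibrium {E : Type*} [Fintype E] [DecidableEq E] {k : ℕ}
    (a b : E → ℝ) (u : E → ℝ → ℝ) (r : Fin k → ℝ)
    (Paths : Fin k → Finset (Finset E)) (P : Fin k → Finset E) : Prop :=
  ∀ i : Fin k, ∀ Q ∈ Paths i,
    playerCost a b u r P i ≤ playerCost a b u r (Function.update P i Q) i

/-!
The game is a weighted potential game. With `f_e` the edge flows, the function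
`Φ(P) = Σ_e (a_e f_e² + 2 b_e f_e) + Σ_i Σ_{e ∈ P_i} (a_e r_i² + 2 r_i u_e(r_i))`
satisfies `Φ(P) = Φ(P without player i) + 2 r_i t_i(P)`, because removing player `i` lowers
`f_e` by `r_i` exactly on `P_i`; the price depends only on the player's own demand, so it is a
player-separable term of `Φ`. Hence a unilateral deviation changes `Φ` by `2 r_i` times the
change of the deviator's cost, and as `r_i > 0` a minimiser of `Φ` over the finitely many
profiles is an equilibrium.
-/

open Function

theorem exists_forall_le_update_of_ordinal_potential {ι S α β : Type*} [Fintype ι]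
    [DecidableEq ι] [LinearOrder α] [LinearOrder β] (A : ι → Finset S)
    (hA : ∀ i, (A i).Nonempty) (cost : (ι → S) → ι → β) (Φ : (ι → S) → α)
    (hΦ : ∀ P i Q, cost (update P i Q) i < cost P i → Φ (update P i Q) < Φ P) :
    ∃ P ∈ Fintype.piFinset A, ∀ i, ∀ Q ∈ A i, cost P i ≤ cost (update P i Q) i := by
  obtain ⟨P, hP, hmin⟩ :=
    (Fintype.piFinset A).exists_min_image Φ (Fintype.piFinset_nonempty.2 hA)
  refine ⟨P, hP, fun i Q hQ => le_of_not_gt fun hlt => (hΦ P i Q hlt).not_ge (hmin _ ?_)⟩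
  refine Fintype.mem_piFinset.2 fun j => ?_
  rcases eq_or_ne j i with rfl | hj
  · simpa
  · simpa [hj] using Fintype.mem_piFinset.1 hP j

theorem Fintype.sum_apply_update {ι S M : Type*} [Fintype ι] [DecidableEq ι] [AddCommGroup M]
    (φ : ι → S → M) (P : ι → S) (i : ι) (x : S) :
    ∑ j, φ j (update P i x j) = ∑ j, φ j (P j) - φ i (P i) + φ i x := by
  simp_rw [apply_update φ, Finset.sum_update_of_mem (Finset.mem_univ i),
    Finset.sum_eq_add_sum_sdiff_singleton_of_mem (Finset.mem_univ i) (fun j => φ j (P j))]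
  abel

section

variable {E : Type*} [Fintype E] [DecidableEq E] {k : ℕ}

noncomputable def routingPotential (a b : E → ℝ) (u : E → ℝ → ℝ) (r : Fin k → ℝ)
    (P : Fin k → Finset E) : ℝ :=
  ∑ e, (a e * edgeFlow r P e ^ 2 + 2 * b e * edgeFlow r P e)
    + ∑ i, ∑ e ∈ P i, (a e * r i ^ 2 + 2 * r i * u e (r i))

theorem edgeFlow_update_empty (r : Fin k → ℝ) (P : Fin k → Finset E) (i : Fin k) (e : E) :
    edgeFlow r (update P i ∅) e = edgeFlow r P e - if e ∈ P i then r i else 0 := by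
  simp [edgeFlow, Fintype.sum_apply_update (fun j (S : Finset E) => if e ∈ S then r j else 0)]

theorem routingPotential_eq_update_empty_add (a b : E → ℝ) (u : E → ℝ → ℝ)
    (r : Fin k → ℝ) (P : Fin k → Finset E) (i : Fin k) :
    routingPotential a b u r P
      = routingPotential a b u r (update P i ∅) + 2 * r i * playerCost a b u r P i := by
  have hplayers := Fintype.sum_apply_update
    (fun j (S : Finset E) => ∑ e ∈ S, (a e * r j ^ 2 + 2 * r j * u e (r j))) P i ∅
  beta_reduce at hplayers
  have hedge (e : E) : a e * edgeFlow r P e ^ 2 + 2 * b e * edgeFlow r P e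
      = a e * edgeFlow r (update P i ∅) e ^ 2 + 2 * b e * edgeFlow r (update P i ∅) e
        + if e ∈ P i then a e * (2 * r i * edgeFlow r P e - r i ^ 2) + 2 * b e * r i else 0 := by
    rw [edgeFlow_update_empty]
    split_ifs <;> ring
  have hedges : ∑ e, (a e * edgeFlow r P e ^ 2 + 2 * b e * edgeFlow r P e)
      = ∑ e, (a e * edgeFlow r (update P i ∅) e ^ 2 + 2 * b e * edgeFlow r (update P i ∅) e)
        + ∑ e ∈ P i, (a e * (2 * r i * edgeFlow r P e - r i ^ 2) + 2 * b e * r i) := by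
    simp only [hedge, Finset.sum_add_distrib, Finset.sum_ite_mem, Finset.univ_inter]
  have hcost : ∑ e ∈ P i, (a e * (2 * r i * edgeFlow r P e - r i ^ 2) + 2 * b e * r i)
      + ∑ e ∈ P i, (a e * r i ^ 2 + 2 * r i * u e (r i)) = 2 * r i * playerCost a b u r P i := by
    rw [playerCost, Finset.mul_sum, ← Finset.sum_add_distrib]
    exact Finset.sum_congr rfl fun e _ => by ring
  rw [routingPotential, routingPotential, hplayers, hedges, Finset.sum_empty, ← hcost]
  ring

theorem routingPotential_update_sub (a b : E → ℝ) (u : E → ℝ → ℝ) (r : Fin k → ℝ)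
    (P : Fin k → Finset E) (i : Fin k) (Q : Finset E) :
    routingPotential a b u r (update P i Q) - routingPotential a b u r P
      = 2 * r i * (playerCost a b u r (update P i Q) i - playerCost a b u r P i) := by
  rw [routingPotential_eq_update_empty_add a b u r (update P i Q) i,
    routingPotential_eq_update_empty_add a b u r P i, update_idem]
  ring

end

/-- Every atomic selfish routing instance with pricing in which every congestion cost is
affine, every demand is strictly positive, and every strategy set is finite and nonempty
admits at least one pure Nash equilibrium. -/
theorem exists_equilibrium {E : Type*} [Fintype E] [DecidableEq E] {k : ℕ}
    (a b : E → ℝ) (u : E → ℝ → ℝ) (r : Fin k → ℝ) (hr : ∀ i, 0 < r i)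
    (Paths : Fin k → Finset (Finset E)) (hPaths : ∀ i, (Paths i).Nonempty) :
    ∃ P : Fin k → Finset E, (∀ i, P i ∈ Paths i) ∧ IsEquilibrium a b u r Paths P := by
  have hdescent (P : Fin k → Finset E) (i : Fin k) (Q : Finset E)
      (hlt : playerCost a b u r (update P i Q) i < playerCost a b u r P i) :
      routingPotential a b u r (update P i Q) < routingPotential a b u r P := by
    have hdrop := mul_neg_of_pos_of_neg (by linarith [hr i] : (0 : ℝ) < 2 * r i) (sub_neg.2 hlt)
    linarith [routingPotential_update_sub a b u r P i Q]
  obtain ⟨P, hP, hP_eq⟩ := exists_forall_le_update_of_ordinal_potential Paths hPaths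
    (playerCost a b u r) (routingPotential a b u r) hdescent
  exact ⟨P, Fintype.mem_piFinset.1 hP, hP_eq⟩
end

section
/- In an atomic selfish routing instance with pricing in which every congestion cost c_e(x) = a_e·x + b_e is affine with a_e ≥ 0 and b_e ≥ 0, every per-unit price u_e(r_i) ≥ 0, and every demand r_i > 0, the price of anarchy is at most (3 + √5)/2: for every equilibrium profile P and every strategy profile P*, SC(P) ≤ ((3 + √5)/2) · SC(P*). -/
/-!
Atomic selfish routing with pricing.  Edges form a finite type `E`; there are `k`
players, player `i` has demand `r i > 0` and a finite nonempty set `Paths i` of paths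
(finite subsets of `E`).  Edge `e` has affine congestion cost `c_e(x) = a e * x + b e`
and per-unit price function `u e : ℝ → ℝ`.
-/

open Finset

/-- The social cost `SC(P) = Σ_{i=1}^k r_i · t_i(P)`. -/
noncomputable def socialCost {E : Type*} [Fintype E] [DecidableEq E] {k : ℕ}
    (a b : E → ℝ) (u : E → ℝ → ℝ) (r : Fin k → ℝ) (P : Fin k → Finset E) : ℝ :=
  ∑ i, r i * playerCost a b u r P i

/-!
Playing the equilibrium cost of each player against a unilateral switch to its path in `P*`
bounds `SC(P)` by `SC(P*)` plus the cross term `Σₑ aₑ fₑ(P) fₑ(P*)`: the switching player adds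
at most its own demand to the flow of each edge, and `Σ_{i ∋ e} rᵢ² ≤ fₑ(P*)²`. Young's
inequality `2φ·xy ≤ x² + φ²y²` with the golden ratio `φ` splits the cross term into parts
absorbed by `SC(P)` and `SC(P*)`, and solving for `SC(P)` gives the factor `φ² = (3 + √5)/2`.
-/

open Real

theorem three_add_sqrt_five_div_two_eq_goldenRatio_sq : (3 + √5) / 2 = goldenRatio ^ 2 := by
  rw [goldenRatio_sq]
  ring

theorem two_mul_sum_mul_mul_le {ι : Type*} (s : Finset ι) (a : ι → ℝ) (ha : ∀ e ∈ s, 0 ≤ a e)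
    (f g : ι → ℝ) (t : ℝ) :
    2 * t * ∑ e ∈ s, a e * f e * g e ≤ ∑ e ∈ s, a e * f e ^ 2 + t ^ 2 * ∑ e ∈ s, a e * g e ^ 2 := by
  simp_rw [mul_sum, ← sum_add_distrib]
  gcongr with e he
  nlinarith [mul_nonneg (ha e he) (sq_nonneg (f e - t * g e))]

theorem le_goldenRatio_sq_mul_of_le {S T C X Y : ℝ} (hS : S ≤ C + T)
    (hC : 2 * goldenRatio * C ≤ X + goldenRatio ^ 2 * Y) (hX : X ≤ S) (hY : Y ≤ T) :
    S ≤ goldenRatio ^ 2 * T := by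
  have hφ : 0 < 2 * goldenRatio - 1 := by linarith [one_lt_goldenRatio]
  have hS' : 2 * goldenRatio * S ≤ 2 * goldenRatio * (C + T) := by gcongr
  have hY' : goldenRatio ^ 2 * Y ≤ goldenRatio ^ 2 * T := by gcongr
  refine le_of_mul_le_mul_left ?_ hφ
  -- `ring` unfolds `goldenRatio`, so `φ ^ 2 = φ + 1` has to be supplied as `√5 ^ 2 = 5`.
  linear_combination
    hS' + hC + hX + hY' - goldenRatio * T / 2 * sq_sqrt (show (0 : ℝ) ≤ 5 by norm_num)

section

variable {E : Type*} [Fintype E] [DecidableEq E] {k : ℕ}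

theorem sum_sum_mem_comm (Q : Fin k → Finset E) (h : Fin k → E → ℝ) :
    ∑ i, ∑ e ∈ Q i, h i e = ∑ e, ∑ i with e ∈ Q i, h i e :=
  sum_comm' (by simp)

theorem edgeFlow_eq_sum_filter (r : Fin k → ℝ) (Q : Fin k → Finset E) (e : E) :
    edgeFlow r Q e = ∑ i with e ∈ Q i, r i :=
  (sum_filter _ _).symm

theorem sum_mul_sum_eq_sum_mul_edgeFlow (r : Fin k → ℝ) (Q : Fin k → Finset E) (h : E → ℝ) :
    ∑ i, r i * ∑ e ∈ Q i, h e = ∑ e, h e * edgeFlow r Q e := by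
  simp_rw [mul_sum, sum_sum_mem_comm, edgeFlow_eq_sum_filter, mul_sum, mul_comm]

theorem sum_mul_sum_mul_le_sum_mul_edgeFlow_sq (a : E → ℝ) (ha : ∀ e, 0 ≤ a e) (r : Fin k → ℝ)
    (hr : ∀ i, 0 ≤ r i) (Q : Fin k → Finset E) :
    ∑ i, r i * ∑ e ∈ Q i, a e * r i ≤ ∑ e, a e * edgeFlow r Q e ^ 2 := by
  have hswap : ∑ i, r i * ∑ e ∈ Q i, a e * r i = ∑ e, a e * ∑ i with e ∈ Q i, r i ^ 2 := by
    simp_rw [mul_sum, sum_sum_mem_comm]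
    exact sum_congr rfl fun e _ => sum_congr rfl fun i _ => by ring
  rw [hswap]
  gcongr with e
  · exact ha e
  · rw [edgeFlow_eq_sum_filter]
    exact sum_sq_le_sq_sum_of_nonneg fun i _ => hr i

theorem edgeFlow_update_le (r : Fin k → ℝ) (P : Fin k → Finset E) {i : Fin k} (hri : 0 ≤ r i)
    (Q : Finset E) (e : E) :
    edgeFlow r (Function.update P i Q) e ≤ edgeFlow r P e + r i := by
  unfold edgeFlow
  rw [← add_sum_erase _ _ (mem_univ i),
    ← add_sum_erase _ (fun j => if e ∈ P j then r j else 0) (mem_univ i)]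
  have hrest : ∑ j ∈ univ.erase i, (if e ∈ Function.update P i Q j then r j else 0)
      = ∑ j ∈ univ.erase i, (if e ∈ P j then r j else 0) :=
    sum_congr rfl fun j hj => by rw [Function.update_of_ne (ne_of_mem_erase hj)]
  rw [hrest, Function.update_self]
  split_ifs <;> linarith

theorem socialCost_eq (a b : E → ℝ) (u : E → ℝ → ℝ) (r : Fin k → ℝ) (Q : Fin k → Finset E) :
    socialCost a b u r Q = ∑ e, a e * edgeFlow r Q e ^ 2
      + ∑ i, r i * ∑ e ∈ Q i, (b e + u e (r i)) := by
  have hsplit : ∀ i, r i * playerCost a b u r Q i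
      = r i * ∑ e ∈ Q i, a e * edgeFlow r Q e + r i * ∑ e ∈ Q i, (b e + u e (r i)) := by
    intro i
    rw [playerCost, ← mul_add, ← sum_add_distrib]
    simp only [add_assoc]
  rw [socialCost, sum_congr rfl fun i _ => hsplit i, sum_add_distrib,
    sum_mul_sum_eq_sum_mul_edgeFlow]
  simp only [mul_assoc, sq]

theorem sum_mul_edgeFlow_sq_le_socialCost (a b : E → ℝ) (hb : ∀ e, 0 ≤ b e) (u : E → ℝ → ℝ)
    (r : Fin k → ℝ) (hu : ∀ e i, 0 ≤ u e (r i)) (hr : ∀ i, 0 ≤ r i) (Q : Fin k → Finset E) :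
    ∑ e, a e * edgeFlow r Q e ^ 2 ≤ socialCost a b u r Q := by
  rw [socialCost_eq, le_add_iff_nonneg_right]
  exact sum_nonneg fun i _ =>
    mul_nonneg (hr i) (sum_nonneg fun e _ => add_nonneg (hb e) (hu e i))

theorem socialCost_le_of_isEquilibrium (a b : E → ℝ) (ha : ∀ e, 0 ≤ a e) (u : E → ℝ → ℝ)
    (r : Fin k → ℝ) (hr : ∀ i, 0 ≤ r i) (Paths : Fin k → Finset (Finset E))
    {P Q : Fin k → Finset E} (hP : IsEquilibrium a b u r Paths P) (hQ : ∀ i, Q i ∈ Paths i) :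
    socialCost a b u r P
      ≤ ∑ e, a e * edgeFlow r P e * edgeFlow r Q e + socialCost a b u r Q := by
  have hdeviate : ∀ i, playerCost a b u r P i
      ≤ ∑ e ∈ Q i, (a e * (edgeFlow r P e + r i) + b e + u e (r i)) := fun i =>
    (hP i (Q i) (hQ i)).trans <| by
      rw [playerCost, Function.update_self]
      gcongr with e
      · exact ha e
      · exact edgeFlow_update_le r P (hr i) (Q i) e
  calc socialCost a b u r P
      ≤ ∑ i, r i * ∑ e ∈ Q i, (a e * (edgeFlow r P e + r i) + b e + u e (r i)) :=
        sum_le_sum fun i _ => mul_le_mul_of_nonneg_left (hdeviate i) (hr i)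
    _ = ∑ e, a e * edgeFlow r P e * edgeFlow r Q e + (∑ i, r i * ∑ e ∈ Q i, a e * r i
          + ∑ i, r i * ∑ e ∈ Q i, (b e + u e (r i))) := by
        simp only [mul_add, add_assoc, sum_add_distrib, sum_mul_sum_eq_sum_mul_edgeFlow]
    _ ≤ ∑ e, a e * edgeFlow r P e * edgeFlow r Q e + (∑ e, a e * edgeFlow r Q e ^ 2
          + ∑ i, r i * ∑ e ∈ Q i, (b e + u e (r i))) := by
        gcongr
        exact sum_mul_sum_mul_le_sum_mul_edgeFlow_sq a ha r hr Q
    _ = ∑ e, a e * edgeFlow r P e * edgeFlow r Q e + socialCost a b u r Q := by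
        rw [socialCost_eq]

end

theorem priceOfAnarchy_le_general {E : Type*} [Fintype E] [DecidableEq E] {k : ℕ}
    (a b : E → ℝ) (u : E → ℝ → ℝ) (r : Fin k → ℝ)
    (ha : ∀ e, 0 ≤ a e) (hb : ∀ e, 0 ≤ b e) (hu : ∀ e i, 0 ≤ u e (r i))
    (hr : ∀ i, 0 < r i)
    (Paths : Fin k → Finset (Finset E))
    (P Pstar : Fin k → Finset E)
    (hPstar : ∀ i, Pstar i ∈ Paths i)
    (heq : IsEquilibrium a b u r Paths P) :
    socialCost a b u r P ≤ (3 + Real.sqrt 5) / 2 * socialCost a b u r Pstar := by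
  have hr₀ : ∀ i, 0 ≤ r i := fun i => (hr i).le
  have hNash := socialCost_le_of_isEquilibrium a b ha u r hr₀ Paths heq hPstar
  have hCross := two_mul_sum_mul_mul_le univ a (fun e _ => ha e)
    (edgeFlow r P) (edgeFlow r Pstar) goldenRatio
  have hX := sum_mul_edgeFlow_sq_le_socialCost a b hb u r hu hr₀ P
  have hY := sum_mul_edgeFlow_sq_le_socialCost a b hb u r hu hr₀ Pstar
  rw [three_add_sqrt_five_div_two_eq_goldenRatio_sq]
  exact le_goldenRatio_sq_mul_of_le hNash hCross hX hY

/-- Price of anarchy bound: if every congestion cost is affine with `a e ≥ 0` and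
`b e ≥ 0`, every per-unit price `u_e(r_i)` is nonnegative, and every demand is positive,
then for every equilibrium profile `P` and every strategy profile `P*`,
`SC(P) ≤ ((3 + √5)/2) · SC(P*)`. -/
theorem priceOfAnarchy_le {E : Type*} [Fintype E] [DecidableEq E] {k : ℕ}
    (a b : E → ℝ) (u : E → ℝ → ℝ) (r : Fin k → ℝ)
    (ha : ∀ e, 0 ≤ a e) (hb : ∀ e, 0 ≤ b e) (hu : ∀ e i, 0 ≤ u e (r i))
    (hr : ∀ i, 0 < r i)
    (Paths : Fin k → Finset (Finset E))
    (P Pstar : Fin k → Finset E)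
    (hP : ∀ i, P i ∈ Paths i) (hPstar : ∀ i, Pstar i ∈ Paths i)
    (heq : IsEquilibrium a b u r Paths P) :
    socialCost a b u r P ≤ (3 + Real.sqrt 5) / 2 * socialCost a b u r Pstar :=
  priceOfAnarchy_le_general a b u r ha hb hu hr Paths P Pstar hPstar heq
end
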